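/- Let n, n_u, n_y, q₁, q₂ be natural numbers with 2q₁ < n_u and n_y - 2q₂ > 0. Let W_u ⊆ {1, ..., n_u} with card(W_u) ≤ q₁ and W_y ⊆ {1, ..., n_y} with card(W_y) ≤ q₂. Let x : ℕ → ℝⁿ be the true state trajectory, and for each pair (J_u, J_s) of subsets of {1, ..., n_u} and {1, ..., n_y} respectively with either (card(J_u) = q₁ and card(J_s) = n_y - q₂) or (card(J_u) = 2q₁ and card(J_s) = n_y - 2q₂), let x̂_{(J_u,J_s)} : ℕ → ℝⁿ be an estimate trajectory. Set e₀ = max over all such pairs of ‖x̂_{(J_u,J_s)}(0) - x(0)‖ (Euclidean norm). Assume that for every such pair with W_u ⊆ J_u and J_s ∩ W_y = ∅ there exists a class-KL function β_{(J_u,J_s)} such that ‖x̂_{(J_u,J_s)}(k) - x(k)‖ ≤ β_{(J_u,J_s)}(e₀, k) for all k ∈ ℕ. For each pair (J_u, J_s) with card(J_u) = q₁ and card(J_s) = n_y - q₂ define π_{(J_u,J_s)}(k) = max over all pairs (S_u, S_s) with J_u ⊆ S_u, card(S_u) = 2q₁, S_s ⊆ J_s, card(S_s) = n_y - 2q₂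 of ‖x̂_{(J_u,J_s)}(k) - x̂_{(S_u,S_s)}(k)‖, and let (σ_u(k), σ_s(k)) be any selection with card(σ_u(k)) = q₁, card(σ_s(k)) = n_y - q₂, and π_{(σ_u(k),σ_s(k))}(k) ≤ π_{(J_u,J_s)}(k) for every such pair (J_u, J_s). Then there exists a class-KL function β̄ such that ‖x̂_{(σ_u(k),σ_s(k))}(k) - x(k)‖ ≤ β̄(e₀, k) for all k ∈ ℕ. -/

import Mathlib

/-!
Summing the finitely many KL bounds of the attack-free observers gives one KL function `β`
bounding all of them. Fix a reference pair `(J_u, J_s)` of the first kind that covers the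
attacked actuators and avoids the attacked sensors. Every pair of the second kind refining it is
again attack-free, so `π_{(J_u,J_s)}(k) ≤ 2β(e₀, k)`, and by minimality the same bound holds for
the selected pair `σ(k)`. Conversely `σ(k)` admits an attack-free refinement `(S_u, S_s)` of the
second kind (take `S_u ⊇ σ_u(k) ∪ W_u` and `S_s ⊆ σ_s(k) \ W_y`), so the triangle inequality
through `x̂_{(S_u,S_s)}(k)` gives the bound `3β(e₀, k)`.
-/

/-- A function `β : ℝ → ℕ → ℝ` is of class KL if, for each fixed `k`, the map
`r ↦ β r k` is continuous and strictly increasing on `[0, ∞)` with `β 0 k = 0`,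
and for each fixed `r ≥ 0`, the map `k ↦ β r k` is nonincreasing and tends to `0`
as `k → ∞`. -/
def IsClassKL (β : ℝ → ℕ → ℝ) : Prop :=
  (∀ k : ℕ, ContinuousOn (fun r => β r k) (Set.Ici (0 : ℝ)) ∧
      StrictMonoOn (fun r => β r k) (Set.Ici (0 : ℝ)) ∧ β 0 k = 0) ∧
  (∀ r : ℝ, 0 ≤ r →
      Antitone (fun k => β r k) ∧
      Filter.Tendsto (fun k => β r k) Filter.atTop (nhds 0))

open Finset

namespace IsClassKL

variable {β γ : ℝ → ℕ → ℝ}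

theorem nonneg (hβ : IsClassKL β) {r : ℝ} (hr : 0 ≤ r) (k : ℕ) : 0 ≤ β r k := by
  simpa only [(hβ.1 k).2.2] using
    (hβ.1 k).2.1.monotoneOn (Set.mem_Ici.mpr le_rfl) (Set.mem_Ici.mpr hr) hr

theorem add (hβ : IsClassKL β) (hγ : IsClassKL γ) :
    IsClassKL (fun r k => β r k + γ r k) := by
  refine ⟨fun k => ⟨(hβ.1 k).1.add (hγ.1 k).1, ?_, by simp [(hβ.1 k).2.2, (hγ.1 k).2.2]⟩,
    fun r hr => ⟨(hβ.2 r hr).1.add (hγ.2 r hr).1, by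
      simpa using (hβ.2 r hr).2.add (hγ.2 r hr).2⟩⟩
  intro a ha b hb hab
  exact add_lt_add ((hβ.1 k).2.1 ha hb hab) ((hγ.1 k).2.1 ha hb hab)

theorem const_mul (hβ : IsClassKL β) {c : ℝ} (hc : 0 < c) :
    IsClassKL (fun r k => c * β r k) := by
  refine ⟨fun k => ⟨continuousOn_const.mul (hβ.1 k).1, ?_, by simp [(hβ.1 k).2.2]⟩,
    fun r hr => ⟨fun k l hkl => mul_le_mul_of_nonneg_left ((hβ.2 r hr).1 hkl) hc.le, by
      simpa using (hβ.2 r hr).2.const_mul c⟩⟩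
  intro a ha b hb hab
  exact mul_lt_mul_of_pos_left ((hβ.1 k).2.1 ha hb hab) hc

theorem add_sum {ι : Type*} {s : Finset ι} {γ : ι → ℝ → ℕ → ℝ} (hβ : IsClassKL β)
    (hγ : ∀ i ∈ s, IsClassKL (γ i)) :
    IsClassKL (fun r k => β r k + ∑ i ∈ s, γ i r k) := by
  classical
  induction s using Finset.induction_on with
  | empty => simpa using hβ
  | insert a s ha ih =>
    have hs : IsClassKL (fun r k => β r k + ∑ i ∈ s, γ i r k) :=
      ih fun i hi => hγ i (mem_insert_of_mem hi)
    convert hs.add (hγ a (mem_insert_self a s)) using 3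
    rw [sum_insert ha]
    ring

end IsClassKL

theorem isClassKL_mul_pow {a : ℝ} (ha₀ : 0 < a) (ha₁ : a < 1) :
    IsClassKL (fun r k => r * a ^ k) := by
  refine ⟨fun k => ⟨continuousOn_id.mul continuousOn_const,
      fun r _ s _ hrs => mul_lt_mul_of_pos_right hrs (pow_pos ha₀ k), zero_mul _⟩,
    fun r hr => ⟨fun k l hkl => mul_le_mul_of_nonneg_left
      (pow_le_pow_of_le_one ha₀.le ha₁.le hkl) hr, ?_⟩⟩
  simpa using (tendsto_pow_atTop_nhds_zero_of_lt_one ha₀.le ha₁).const_mul r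

theorem exists_isClassKL_forall_le {ι : Type*} [Finite ι] {p : ι → Prop}
    {f : ι → ℕ → ℝ} {r : ℝ} (hr : 0 ≤ r) (h : ∀ i, p i → ∃ β, IsClassKL β ∧ ∀ k, f i k ≤ β r k) :
    ∃ β, IsClassKL β ∧ ∀ i, p i → ∀ k, f i k ≤ β r k := by
  classical
  have := Fintype.ofFinite ι
  choose! β hβ hfβ using h
  -- the summand `r * (1/2)^k` keeps the bound strictly increasing when no `p i` holds
  refine ⟨fun r k => r * (1 / 2) ^ k + ∑ i ∈ univ.filter p, β i r k,
    (isClassKL_mul_pow (by norm_num) (by norm_num)).add_sum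
      fun i hi => hβ i (mem_filter.mp hi).2, fun i hi k => ?_⟩
  calc f i k ≤ β i r k := hfβ i hi k
    _ ≤ ∑ j ∈ univ.filter p, β j r k :=
      single_le_sum (fun j hj => (hβ j (mem_filter.mp hj).2).nonneg hr k)
        (mem_filter.mpr ⟨mem_univ i, hi⟩)
    _ ≤ r * (1 / 2) ^ k + ∑ j ∈ univ.filter p, β j r k :=
      le_add_of_nonneg_left (by positivity)

theorem Finset.exists_subset_disjoint_card_eq {α : Type*} [DecidableEq α] {s t : Finset α}
    {n : ℕ} (h : n + t.card ≤ s.card) : ∃ u ⊆ s, Disjoint u t ∧ u.card = n := by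
  obtain ⟨u, hu, rfl⟩ := exists_subset_card_eq (s := s \ t) (n := n)
    (by have := le_card_sdiff t s; omega)
  exact ⟨u, hu.trans sdiff_subset, disjoint_of_subset_left hu sdiff_disjoint, rfl⟩

/-- Theorem 2 of the paper: the partial multi-observer estimator
`x̂(k) = x̂_{(σ_u(k), σ_s(k))}(k)`, where `(σ_u(k), σ_s(k))` minimizes the deviation
statistic `π` over all admissible pairs, has asymptotically stable estimation error
despite actuator and sensor attacks. -/
theorem partial_multiobserver_estimator_KL_bound
    (n n_u n_y q₁ q₂ : ℕ) (h1 : 2 * q₁ < n_u) (h2 : 0 < n_y - 2 * q₂)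
    (Wu : Finset (Fin n_u)) (hWu : Wu.card ≤ q₁)
    (Wy : Finset (Fin n_y)) (hWy : Wy.card ≤ q₂)
    (x : ℕ → EuclideanSpace ℝ (Fin n))
    (xhat : Finset (Fin n_u) → Finset (Fin n_y) → ℕ → EuclideanSpace ℝ (Fin n))
    (e₀ : ℝ)
    (he₀ : e₀ = sSup {r : ℝ | ∃ (Ju : Finset (Fin n_u)) (Js : Finset (Fin n_y)),
      ((Ju.card = q₁ ∧ Js.card = n_y - q₂) ∨
        (Ju.card = 2 * q₁ ∧ Js.card = n_y - 2 * q₂)) ∧ r = ‖xhat Ju Js 0 - x 0‖})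
    (hstable : ∀ (Ju : Finset (Fin n_u)) (Js : Finset (Fin n_y)),
      ((Ju.card = q₁ ∧ Js.card = n_y - q₂) ∨
        (Ju.card = 2 * q₁ ∧ Js.card = n_y - 2 * q₂)) →
      Wu ⊆ Ju → Js ∩ Wy = ∅ →
      ∃ β : ℝ → ℕ → ℝ, IsClassKL β ∧ ∀ k : ℕ, ‖xhat Ju Js k - x k‖ ≤ β e₀ k)
    (π : Finset (Fin n_u) → Finset (Fin n_y) → ℕ → ℝ)
    (hπ : ∀ (Ju : Finset (Fin n_u)) (Js : Finset (Fin n_y)) (k : ℕ),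
      Ju.card = q₁ → Js.card = n_y - q₂ →
      π Ju Js k = sSup {r : ℝ | ∃ (Su : Finset (Fin n_u)) (Ss : Finset (Fin n_y)),
        Ju ⊆ Su ∧ Su.card = 2 * q₁ ∧ Ss ⊆ Js ∧ Ss.card = n_y - 2 * q₂ ∧
        r = ‖xhat Ju Js k - xhat Su Ss k‖})
    (σu : ℕ → Finset (Fin n_u)) (σs : ℕ → Finset (Fin n_y))
    (hσcard : ∀ k : ℕ, (σu k).card = q₁ ∧ (σs k).card = n_y - q₂)
    (hσmin : ∀ (k : ℕ) (Ju : Finset (Fin n_u)) (Js : Finset (Fin n_y)),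
      Ju.card = q₁ → Js.card = n_y - q₂ → π (σu k) (σs k) k ≤ π Ju Js k) :
    ∃ βbar : ℝ → ℕ → ℝ, IsClassKL βbar ∧
      ∀ k : ℕ, ‖xhat (σu k) (σs k) k - x k‖ ≤ βbar e₀ k := by
  classical
  have he₀_nonneg : 0 ≤ e₀ :=
    he₀ ▸ Real.sSup_nonneg (by rintro _ ⟨_, _, -, rfl⟩; positivity)
  obtain ⟨β, hβ, hβ_bound⟩ := exists_isClassKL_forall_le
    (p := fun J : Finset (Fin n_u) × Finset (Fin n_y) =>
      ((J.1.card = q₁ ∧ J.2.card = n_y - q₂) ∨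
        (J.1.card = 2 * q₁ ∧ J.2.card = n_y - 2 * q₂)) ∧ Wu ⊆ J.1 ∧ J.2 ∩ Wy = ∅)
    (f := fun J k => ‖xhat J.1 J.2 k - x k‖) he₀_nonneg
    fun J ⟨hJ, hWuJ, hJWy⟩ => hstable _ _ hJ hWuJ hJWy
  have h_attack_free {Ju Js} (hJ) (hWuJ : Wu ⊆ Ju) (hJWy : Disjoint Js Wy) (k) :
      ‖xhat Ju Js k - x k‖ ≤ β e₀ k :=
    hβ_bound (Ju, Js) ⟨hJ, hWuJ, disjoint_iff_inter_eq_empty.mp hJWy⟩ k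
  refine ⟨fun r k => 3 * β r k, hβ.const_mul three_pos, fun k => ?_⟩
  obtain ⟨Ju, hWuJu, hJu⟩ := exists_superset_card_eq (n := q₁) hWu (by simp; omega)
  obtain ⟨Js, -, hJsWy, hJs⟩ := exists_subset_disjoint_card_eq (s := univ) (t := Wy)
    (n := n_y - q₂) (by simp; omega)
  obtain ⟨Su, hσSu, hSu⟩ := exists_superset_card_eq (s := σu k ∪ Wu) (n := 2 * q₁)
    ((card_union_le _ _).trans (by have := hσcard k; omega)) (by simp; omega)
  obtain ⟨Ss, hSsσ, hSsWy, hSs⟩ := exists_subset_disjoint_card_eq (s := σs k) (t := Wy)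
    (n := n_y - 2 * q₂) (by have := hσcard k; have := le_card_sdiff Wy (σs k); omega)
  have h_ref : π Ju Js k ≤ 2 * β e₀ k := by
    rw [hπ Ju Js k hJu hJs]
    refine Real.sSup_le ?_ (by linarith [hβ.nonneg he₀_nonneg k])
    rintro _ ⟨Su', Ss', hJuSu', hSu', hSs'Js, hSs', rfl⟩
    linarith [norm_sub_le_norm_sub_add_norm_sub (xhat Ju Js k) (x k) (xhat Su' Ss' k),
      norm_sub_rev (x k) (xhat Su' Ss' k), h_attack_free (Or.inl ⟨hJu, hJs⟩) hWuJu hJsWy k,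
      h_attack_free (Or.inr ⟨hSu', hSs'⟩) (hWuJu.trans hJuSu') (hJsWy.mono_left hSs'Js) k]
  have h_sel : ‖xhat (σu k) (σs k) k - xhat Su Ss k‖ ≤ π (σu k) (σs k) k := by
    rw [hπ _ _ k (hσcard k).1 (hσcard k).2]
    refine le_csSup ((Set.finite_range fun J : _ × _ =>
        ‖xhat (σu k) (σs k) k - xhat J.1 J.2 k‖).subset ?_).bddAbove
      ⟨Su, Ss, subset_union_left.trans hσSu, hSu, hSsσ, hSs, rfl⟩
    rintro _ ⟨Su', Ss', -, -, -, -, rfl⟩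
    exact ⟨(Su', Ss'), rfl⟩
  linarith [norm_sub_le_norm_sub_add_norm_sub (xhat (σu k) (σs k) k) (xhat Su Ss k) (x k),
    hσmin k Ju Js hJu hJs,
    h_attack_free (Or.inr ⟨hSu, hSs⟩) (subset_union_right.trans hσSu) hSsWy k]
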